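/- arXiv:1012.4019 — 2 statements merged into one kernel-verified Lean document; each statement's English description precedes it below -/
import Mathlib

section
/- Let N > N₀ for a sufficiently large constant N₀, let k = ⌊√((1/2)·log₂N·log₂log₂N)⌋ and m = ⌈(log₂(N/2))/(k - log₂(2k))⌉, and set ρ = (N/2)^{1/m} and B_i = ⌊N/ρ^i⌋ for 0 ≤ i ≤ m. Then B₀ = N, B_m = 2, and for every i ∈ {1, ..., m}, 4k ≤ B_{i-1}/B_i ≤ 2^k/k. -/
open Finset Real Filter

/-! With `L = log₂(N/2)` and `d = k - log₂(2k)`, the choice `m = ⌈L/d⌉` puts the exponent of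
`ρ = 2^(L/m)` in `[d/2, d]` as soon as `d ≤ L`. Since `2^d = 2^k/(2k)` and `d ≥ k/2`, this gives
`4k + 1 ≤ ρ ≤ 2^k/(2k)` once `k` is large, and `k → ∞` with `N`. The values `N/ρ^i` for `i ≤ m` are
at least `2` and consecutive ones have ratio exactly `ρ`; taking floors keeps the ratio in
`[ρ - 1, 2ρ]`. -/

lemma eventually_mul_le_two_rpow_div {c a : ℝ} (hc : 0 < c) (ha : 0 < a) :
    ∀ᶠ n : ℕ in atTop, c * n ≤ (2 : ℝ) ^ ((n : ℝ) / a) := by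
  have hr : 1 < (2 : ℝ) ^ (1 / a) := one_lt_rpow one_lt_two (by positivity)
  filter_upwards [(isLittleO_coe_const_pow_of_one_lt (R := ℝ) hr).bound (inv_pos.2 hc)] with n hn
  rw [norm_natCast, norm_of_nonneg (by positivity), ← rpow_natCast, ← rpow_mul zero_le_two,
    one_div_mul_eq_div] at hn
  exact (le_inv_mul_iff₀ hc).1 hn

lemma logb_two_le_two_mul {M : ℝ} (hM : 0 ≤ M) : logb 2 M ≤ 2 * M := by
  have hlog2 : 1 / 2 < log 2 := by linarith [log_two_gt_d9]
  rw [logb, div_le_iff₀ (by linarith)]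
  nlinarith [log_le_self hM]

lemma sqrt_half_mul_logb_le_self {M : ℝ} (hM : 0 ≤ M) : √((1 / 2) * M * logb 2 M) ≤ M := by
  rw [sqrt_le_left hM]
  nlinarith [logb_two_le_two_mul hM]

lemma tendsto_floor_sqrt_logb_mul_logb_logb :
    Tendsto (fun N : ℕ => ⌊√((1 / 2) * logb 2 N * logb 2 (logb 2 N))⌋₊) atTop atTop := by
  have hlog : Tendsto (fun N : ℕ => logb 2 (N : ℝ)) atTop atTop :=
    (tendsto_logb_atTop one_lt_two).comp tendsto_natCast_atTop_atTop
  have hprod := hlog.atTop_mul_atTop₀ ((tendsto_logb_atTop one_lt_two).comp hlog)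
  refine tendsto_nat_floor_atTop.comp (tendsto_sqrt_atTop.comp ?_)
  simp_rw [mul_assoc]
  exact hprod.const_mul_atTop one_half_pos

lemma div_ceil_div_le {L d : ℝ} (hd : 0 < d) : L / ⌈L / d⌉₊ ≤ d := by
  rcases (⌈L / d⌉₊).eq_zero_or_pos with hm | hm
  · simp [hm, hd.le]
  · rw [div_le_iff₀ (by exact_mod_cast hm), ← div_le_iff₀' hd]
    exact Nat.le_ceil _

lemma half_le_div_ceil_div {L d : ℝ} (hd : 0 < d) (hdL : d ≤ L) : d / 2 ≤ L / ⌈L / d⌉₊ := by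
  have hLd : 0 < L / d := div_pos (hd.trans_le hdL) hd
  have hm : (0 : ℝ) < ⌈L / d⌉₊ := by exact_mod_cast Nat.ceil_pos.2 hLd
  have hceil : (⌈L / d⌉₊ : ℝ) < L / d + 1 := Nat.ceil_lt_add_one hLd.le
  rw [le_div_iff₀ hm]
  have : d * ⌈L / d⌉₊ < d * (L / d + 1) := mul_lt_mul_of_pos_left hceil hd
  rw [mul_add, mul_div_cancel₀ _ hd.ne'] at this
  linarith

lemma sub_one_le_floor_mul_div_floor {ρ y : ℝ} (hρ : 1 ≤ ρ) (hy : 1 ≤ y) :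
    ρ - 1 ≤ (⌊ρ * y⌋₊ : ℝ) / ⌊y⌋₊ := by
  have hfy : (1 : ℝ) ≤ ⌊y⌋₊ := by exact_mod_cast Nat.one_le_floor_iff _ |>.2 hy
  rw [le_div_iff₀ (by linarith)]
  nlinarith [Nat.floor_le (by linarith : 0 ≤ y), Nat.sub_one_lt_floor (ρ * y)]

lemma floor_mul_div_floor_le {ρ y : ℝ} (hρ : 0 ≤ ρ) (hy : 2 ≤ y) :
    (⌊ρ * y⌋₊ : ℝ) / ⌊y⌋₊ ≤ 2 * ρ := by
  have hfy : y - 1 < ⌊y⌋₊ := Nat.sub_one_lt_floor y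
  rw [div_le_iff₀ (by linarith)]
  nlinarith [Nat.floor_le (by positivity : 0 ≤ ρ * y)]

lemma two_le_div_pow_of_le {x ρ : ℝ} {m i : ℕ} (hρ : 1 ≤ ρ) (hρm : ρ ^ m = x / 2) (hi : i ≤ m) :
    2 ≤ x / ρ ^ i := by
  have hpos : 0 < ρ ^ i := by positivity
  rw [le_div_iff₀ hpos]
  linarith [pow_le_pow_right₀ hρ hi]

lemma div_pow_pred {x ρ : ℝ} {i : ℕ} (hρ : ρ ≠ 0) (hi : 1 ≤ i) :
    x / ρ ^ (i - 1) = ρ * (x / ρ ^ i) := by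
  obtain ⟨j, rfl⟩ := Nat.exists_eq_add_of_le' hi
  rw [Nat.add_sub_cancel, pow_succ]
  field_simp

lemma floor_div_pow_ratio_bounds {x ρ : ℝ} {m i : ℕ} (hρ : 1 ≤ ρ) (hρm : ρ ^ m = x / 2)
    (hi : i ∈ Icc 1 m) :
    ρ - 1 ≤ (⌊x / ρ ^ (i - 1)⌋₊ : ℝ) / ⌊x / ρ ^ i⌋₊ ∧
      (⌊x / ρ ^ (i - 1)⌋₊ : ℝ) / ⌊x / ρ ^ i⌋₊ ≤ 2 * ρ := by
  obtain ⟨hi1, him⟩ := mem_Icc.1 hi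
  have hy := two_le_div_pow_of_le hρ hρm him
  rw [div_pow_pred (by positivity) hi1]
  exact ⟨sub_one_le_floor_mul_div_floor hρ (by linarith), floor_mul_div_floor_le (by linarith) hy⟩

lemma root_bounds_of_ceil_logb_div {k m : ℕ} {x : ℝ} (hk : 1 ≤ k)
    (h2k : 2 * (k : ℝ) ≤ 2 ^ ((k : ℝ) / 2)) (h4k : 4 * (k : ℝ) + 1 ≤ 2 ^ ((k : ℝ) / 4))
    (hx : 0 < x) (hkx : (k : ℝ) ≤ logb 2 x + 1)
    (hm : m = ⌈logb 2 x / ((k : ℝ) - logb 2 (2 * k))⌉₊) :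
    4 * (k : ℝ) + 1 ≤ x ^ ((1 : ℝ) / m) ∧ 2 * x ^ ((1 : ℝ) / m) ≤ 2 ^ k / k ∧
      (x ^ ((1 : ℝ) / m)) ^ m = x := by
  set L := logb 2 x
  set d : ℝ := k - logb 2 (2 * k) with hd
  have hk0 : (1 : ℝ) ≤ k := by exact_mod_cast hk
  have hlog_lb : 1 ≤ logb 2 (2 * (k : ℝ)) := by
    rw [le_logb_iff_rpow_le one_lt_two (by positivity), rpow_one]
    linarith
  have hlog_ub : logb 2 (2 * (k : ℝ)) ≤ k / 2 :=
    (logb_le_iff_le_rpow one_lt_two (by positivity)).2 h2k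
  have hd_pos : 0 < d := by linarith
  have hdL : d ≤ L := by linarith
  have hm0 : m ≠ 0 := hm ▸ (Nat.ceil_pos.2 (div_pos (hd_pos.trans_le hdL) hd_pos)).ne'
  have hx2 : x = 2 ^ L := (rpow_logb two_pos (by norm_num) hx).symm
  have hρ : x ^ ((1 : ℝ) / m) = 2 ^ (L / m) := by
    rw [hx2, ← rpow_mul zero_le_two, mul_one_div]
  have hLm_lb : d / 2 ≤ L / m := hm ▸ half_le_div_ceil_div hd_pos hdL
  have hLm_ub : L / m ≤ d := hm ▸ div_ceil_div_le hd_pos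
  have h2d : (2 : ℝ) ^ d = 2 ^ k / (2 * k) := by
    rw [hd, rpow_sub two_pos, rpow_logb two_pos (by norm_num) (by positivity), rpow_natCast]
  refine ⟨?_, ?_, ?_⟩
  · rw [hρ]
    refine h4k.trans (rpow_le_rpow_of_exponent_le one_le_two ?_)
    linarith
  · calc 2 * x ^ ((1 : ℝ) / m) ≤ 2 * 2 ^ d := by
          rw [hρ]
          gcongr
          exact one_le_two
      _ = 2 ^ k / k := by
          rw [h2d]
          field_simp
  · rw [one_div]
    exact rpow_inv_natCast_pow hx.le hm0

/-- Lemma on the sieve sizes for `dcomb`: for all sufficiently large `N`, with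
`k = ⌊√(½·log₂N·log₂log₂N)⌋`, `m = ⌈log₂(N/2)/(k - log₂(2k))⌉`,
`ρ = (N/2)^{1/m}` and `B_i = ⌊N/ρ^i⌋`, one has `B₀ = N`, `B_m = 2`, and
`4k ≤ B_{i-1}/B_i ≤ 2^k/k` for all `1 ≤ i ≤ m`. -/
theorem stmt_7 :
    ∃ N₀ : ℕ, ∀ N : ℕ, N₀ < N →
      let k : ℕ := ⌊Real.sqrt ((1 / 2) * Real.logb 2 N * Real.logb 2 (Real.logb 2 N))⌋₊
      let m : ℕ := ⌈Real.logb 2 ((N : ℝ) / 2) / ((k : ℝ) - Real.logb 2 (2 * k))⌉₊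
      let ρ : ℝ := ((N : ℝ) / 2) ^ ((1 : ℝ) / m)
      let B : ℕ → ℕ := fun i => ⌊(N : ℝ) / ρ ^ i⌋₊
      B 0 = N ∧ B m = 2 ∧
        ∀ i ∈ Finset.Icc 1 m,
          4 * (k : ℝ) ≤ (B (i - 1) : ℝ) / (B i : ℝ) ∧
          (B (i - 1) : ℝ) / (B i : ℝ) ≤ 2 ^ k / (k : ℝ) := by
  obtain ⟨K, hK⟩ := eventually_atTop.1 <| (eventually_ge_atTop 1).and <|
    (eventually_mul_le_two_rpow_div two_pos two_pos).and
      (eventually_mul_le_two_rpow_div (c := 5) (by norm_num) (by norm_num : (0 : ℝ) < 4))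
  obtain ⟨N₀, hN₀⟩ := eventually_atTop.1 <|
    (tendsto_floor_sqrt_logb_mul_logb_logb.eventually_ge_atTop K).and (eventually_ge_atTop 2)
  refine ⟨N₀, fun N hN => ?_⟩
  intro k m ρ B
  obtain ⟨hkK, hN2⟩ := hN₀ N hN.le
  obtain ⟨hk1, h2k, h5k⟩ := hK k hkK
  replace hN2 : (2 : ℝ) ≤ N := by exact_mod_cast hN2
  have hkN : (k : ℝ) ≤ logb 2 ((N : ℝ) / 2) + 1 := by
    rw [logb_div (by positivity) two_ne_zero, logb_self_eq_one one_lt_two, sub_add_cancel]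
    refine (Nat.floor_le (sqrt_nonneg _)).trans (sqrt_half_mul_logb_le_self ?_)
    exact logb_nonneg one_lt_two (by linarith)
  have hk : (1 : ℝ) ≤ k := by exact_mod_cast hk1
  obtain ⟨hρ_lb, hρ_ub, hρm⟩ :=
    root_bounds_of_ceil_logb_div (m := m) hk1 h2k (by linarith) (by positivity) hkN rfl
  refine ⟨by simp [B], ?_, fun i hi => ?_⟩
  · simp only [B, ρ]
    rw [hρm, div_div_cancel₀ (by positivity)]
    simp
  · obtain ⟨hlow, hup⟩ := floor_div_pow_ratio_bounds (by linarith) hρm hi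
    exact ⟨by linarith, hup.trans hρ_ub⟩
end

section
/- Let N > N₀' for a sufficiently large constant N₀', let k = ⌊√((1/2)·log₂N·log₂log₂N)⌋ and m = ⌈(log₂N)/(k - log₂(4k))⌉, and set ρ = N^{1/m} and B_i = ⌊N/ρ^i⌋ for 0 ≤ i ≤ m. Then B₀ = N, B_m = 1, and B_{i-1}/B_i ≤ 2^k/(2k) for every i ∈ {1, ..., m}. -/
open Finset Real

/-! Put `d = k - log₂(4k)`; once `k ≥ 5` we have `4k < 2^k`, so `d > 0`. The choice
`m = ⌈log₂N / d⌉` then gives `ρ = 2^(log₂N / m) ≤ 2^d = 2^k / (4k)`, and `ρ^m = N` gives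
`B_m = 1`. Since `⌊x⌋ > x / 2` for `x ≥ 1`, each ratio `B_{i-1} / B_i` is at most
`2ρ ≤ 2^k / (2k)`. -/

lemma four_mul_lt_two_pow {k : ℕ} (hk : 5 ≤ k) : 4 * k < 2 ^ k := by
  induction k, hk using Nat.le_induction with
  | base => norm_num
  | succ k _ ih => rw [pow_succ]; omega

lemma logb_two_four_mul_lt {k : ℕ} (hk : 5 ≤ k) : logb 2 (4 * k) < k := by
  rw [logb_lt_iff_lt_rpow one_lt_two (by positivity), rpow_natCast]
  exact_mod_cast four_mul_lt_two_pow hk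

lemma five_le_floor_sqrt_half_logb_mul_logb_logb {N : ℝ} (hN : 2 ^ 16 ≤ N) :
    5 ≤ ⌊√(1 / 2 * logb 2 N * logb 2 (logb 2 N))⌋₊ := by
  have hL : 16 ≤ logb 2 N := by
    rw [le_logb_iff_rpow_le one_lt_two (by positivity)]; norm_num; linarith
  have hLL : 4 ≤ logb 2 (logb 2 N) := by
    rw [le_logb_iff_rpow_le one_lt_two (by positivity)]; norm_num; linarith
  refine Nat.le_floor ?_
  rw [Nat.cast_ofNat, le_sqrt (by norm_num) (by positivity)]
  nlinarith

lemma rpow_one_div_ceil_logb_div_le {b x d : ℝ} (hb : 1 < b) (hx : 0 < x) (hd : 0 < d) :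
    x ^ (1 / ⌈logb b x / d⌉₊ : ℝ) ≤ b ^ d := by
  set m := ⌈logb b x / d⌉₊
  rcases Nat.eq_zero_or_pos m with hm | hm
  · simpa [hm] using one_le_rpow hb.le hd.le
  have hle : logb b x / m ≤ d := by
    rw [div_le_iff₀ (by exact_mod_cast hm), mul_comm, ← div_le_iff₀ hd]
    exact Nat.le_ceil _
  calc x ^ (1 / m : ℝ) = b ^ (logb b x / m) := by
        rw [div_eq_mul_one_div (logb b x), rpow_mul (by linarith),
          rpow_logb (by linarith) hb.ne' hx]
    _ ≤ b ^ d := rpow_le_rpow_of_exponent_le hb.le hle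

lemma floor_div_floor_le_two_mul_div {x y : ℝ} (hx : 1 ≤ x) (hy : 0 ≤ y) :
    (⌊y⌋₊ : ℝ) / ⌊x⌋₊ ≤ 2 * (y / x) := by
  have hfloor := Nat.div_two_lt_floor hx
  calc (⌊y⌋₊ : ℝ) / ⌊x⌋₊ ≤ y / (x / 2) :=
        div_le_div₀ hy (Nat.floor_le hy) (by positivity) hfloor.le
    _ = 2 * (y / x) := by field_simp

lemma floor_div_pow_pred_div_floor_div_pow_le {N ρ : ℝ} {i : ℕ} (hρ : 1 ≤ ρ) (hi : 1 ≤ i)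
    (hiN : ρ ^ i ≤ N) : (⌊N / ρ ^ (i - 1)⌋₊ : ℝ) / ⌊N / ρ ^ i⌋₊ ≤ 2 * ρ := by
  have hρi : 0 < ρ ^ i := by positivity
  have hpow : ρ ^ i = ρ ^ (i - 1) * ρ := by rw [← pow_succ, Nat.sub_add_cancel hi]
  calc (⌊N / ρ ^ (i - 1)⌋₊ : ℝ) / ⌊N / ρ ^ i⌋₊
      ≤ 2 * ((N / ρ ^ (i - 1)) / (N / ρ ^ i)) :=
        floor_div_floor_le_two_mul_div ((one_le_div hρi).mpr hiN)
          (div_nonneg (hρi.le.trans hiN) (by positivity))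
    _ = 2 * ρ := by
        have hN : 0 < N := hρi.trans_le hiN
        rw [hpow]; field_simp

/-- Lemma on the sieve sizes for `zcomb`: for all sufficiently large `N`, with
`k = ⌊√(½·log₂N·log₂log₂N)⌋`, `m = ⌈log₂N/(k - log₂(4k))⌉`, `ρ = N^{1/m}` and
`B_i = ⌊N/ρ^i⌋`, one has `B₀ = N`, `B_m = 1`, and `B_{i-1}/B_i ≤ 2^k/(2k)`
for all `1 ≤ i ≤ m`. -/
theorem stmt_8 :
    ∃ N₀ : ℕ, ∀ N : ℕ, N₀ < N →
      let k : ℕ := ⌊Real.sqrt ((1 / 2) * Real.logb 2 N * Real.logb 2 (Real.logb 2 N))⌋₊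
      let m : ℕ := ⌈Real.logb 2 (N : ℝ) / ((k : ℝ) - Real.logb 2 (4 * k))⌉₊
      let ρ : ℝ := (N : ℝ) ^ ((1 : ℝ) / m)
      let B : ℕ → ℕ := fun i => ⌊(N : ℝ) / ρ ^ i⌋₊
      B 0 = N ∧ B m = 1 ∧
        ∀ i ∈ Finset.Icc 1 m,
          (B (i - 1) : ℝ) / (B i : ℝ) ≤ 2 ^ k / (2 * (k : ℝ)) := by
  refine ⟨2 ^ 16, fun N hN => ?_⟩
  intro k m ρ B
  have hNR : (2 : ℝ) ^ 16 ≤ N := by exact_mod_cast hN.le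
  have hN : (0 : ℝ) < N := by linarith
  have hk : 5 ≤ k := five_le_floor_sqrt_half_logb_mul_logb_logb hNR
  have hd : 0 < (k : ℝ) - logb 2 (4 * k) := sub_pos.mpr (logb_two_four_mul_lt hk)
  have hm : m ≠ 0 := (Nat.ceil_pos.mpr (div_pos (logb_pos one_lt_two (by linarith)) hd)).ne'
  have hρm : ρ ^ m = N := by simp only [ρ, one_div]; exact rpow_inv_natCast_pow hN.le hm
  have hρ1 : 1 ≤ ρ := one_le_rpow (by linarith) (by positivity)
  have hρ : ρ ≤ 2 ^ k / (4 * k) := by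
    have := rpow_one_div_ceil_logb_div_le one_lt_two hN hd
    rwa [rpow_sub two_pos, rpow_natCast, rpow_logb two_pos (by norm_num) (by positivity)] at this
  refine ⟨by simp [B], by simp [B, hρm, hN.ne'], fun i hi => ?_⟩
  obtain ⟨hi1, him⟩ := Finset.mem_Icc.mp hi
  calc (B (i - 1) : ℝ) / B i ≤ 2 * ρ :=
        floor_div_pow_pred_div_floor_div_pow_le hρ1 hi1 (hρm ▸ pow_le_pow_right₀ hρ1 him)
    _ ≤ 2 * (2 ^ k / (4 * k)) := by linarith
    _ = 2 ^ k / (2 * k) := by field_simp; ring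
end
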